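/- The function λ ↦ σ_2(λ)^{1/2} is concave on the cone Γ_2 ⊂ ℝ^n. -/

import Mathlib

/-
The polarization `B = sigma2Polar` of the quadratic form `σ₂` satisfies a reversed Cauchy–Schwarz inequality
`B(λ, μ) ≥ 2 √(σ₂ λ) √(σ₂ μ)` on `Γ₂`: for `s = σ₁ λ / σ₁ μ > 0` the vector `λ - s μ` has
`σ₁ = 0`, hence `σ₂ (λ - s μ) = -|λ - s μ|² / 2 ≤ 0`, i.e. `s B ≥ σ₂ λ + s² σ₂ μ`, and AM-GM
finishes. Expanding `σ₂ (t λ + (1 - t) μ)` then bounds it below by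
`(t √(σ₂ λ) + (1 - t) √(σ₂ μ))²`.
-/

open Finset

def sigma1 {n : ℕ} (lam : Fin n → ℝ) : ℝ := ∑ i, lam i

def sigma2 {n : ℕ} (lam : Fin n → ℝ) : ℝ :=
  ∑ i, ∑ j, if i < j then lam i * lam j else 0

def sigma2Polar {n : ℕ} (lam mu : Fin n → ℝ) : ℝ :=
  ∑ i, ∑ j, if i < j then lam i * mu j + mu i * lam j else 0

lemma sigma2_linear_combination {n : ℕ} (a b : ℝ) (lam mu : Fin n → ℝ) :
    sigma2 (fun i => a * lam i + b * mu i)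
      = a ^ 2 * sigma2 lam + a * b * sigma2Polar lam mu + b ^ 2 * sigma2 mu := by
  simp only [sigma2, sigma2Polar, mul_sum, ← sum_add_distrib]
  refine sum_congr rfl fun i _ => sum_congr rfl fun j _ => ?_
  split_ifs <;> ring

lemma sigma1_linear_combination {n : ℕ} (a b : ℝ) (lam mu : Fin n → ℝ) :
    sigma1 (fun i => a * lam i + b * mu i) = a * sigma1 lam + b * sigma1 mu := by
  simp only [sigma1, sum_add_distrib, mul_sum]

lemma two_mul_sigma2 {n : ℕ} (v : Fin n → ℝ) :
    2 * sigma2 v = sigma1 v ^ 2 - ∑ i, v i ^ 2 := by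
  have hsplit : ∀ i j : Fin n, v i * v j = (if i < j then v i * v j else 0)
      + (if j < i then v j * v i else 0) + (if i = j then v i * v j else 0) := by
    intro i j
    rcases lt_trichotomy i j with h | rfl | h
    · simp [h, h.ne, h.asymm]
    · simp
    · simp [h, h.ne', h.asymm, mul_comm]
  have hlower : (∑ i, ∑ j, if j < i then v j * v i else 0) = sigma2 v := sum_comm
  have hdiag : (∑ i, ∑ j, if i = j then v i * v j else 0) = ∑ i, v i ^ 2 := by
    simp [sq]
  calc 2 * sigma2 v
      = ∑ i, ∑ j, ((if i < j then v i * v j else 0) + (if j < i then v j * v i else 0)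
          + (if i = j then v i * v j else 0)) - ∑ i, v i ^ 2 := by
        simp only [sum_add_distrib, hlower, hdiag, sigma2]
        ring
    _ = sigma1 v ^ 2 - ∑ i, v i ^ 2 := by
        simp only [← hsplit, sigma1, sq, sum_mul_sum]

lemma sigma2_nonpos_of_sigma1_eq_zero {n : ℕ} {v : Fin n → ℝ} (hv : sigma1 v = 0) :
    sigma2 v ≤ 0 := by
  have hsq : 0 ≤ ∑ i, v i ^ 2 := sum_nonneg fun i _ => sq_nonneg (v i)
  have h := two_mul_sigma2 v
  rw [hv, zero_pow two_ne_zero] at h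
  linarith

lemma two_mul_sqrt_sigma2_mul_sqrt_sigma2_le_sigma2Polar {n : ℕ} {lam mu : Fin n → ℝ}
    (h1lam : 0 < sigma1 lam) (h2lam : 0 ≤ sigma2 lam)
    (h1mu : 0 < sigma1 mu) (h2mu : 0 ≤ sigma2 mu) :
    2 * √(sigma2 lam) * √(sigma2 mu) ≤ sigma2Polar lam mu := by
  set s := sigma1 lam / sigma1 mu
  have hs : 0 < s := div_pos h1lam h1mu
  have hbalanced : sigma1 (fun i => 1 * lam i + (-s) * mu i) = 0 := by
    have hscale : s * sigma1 mu = sigma1 lam := div_mul_cancel₀ _ h1mu.ne'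
    rw [sigma1_linear_combination]
    linarith
  have hdiff := sigma2_nonpos_of_sigma1_eq_zero hbalanced
  rw [sigma2_linear_combination] at hdiff
  have hA := Real.sq_sqrt h2lam
  have hB := Real.sq_sqrt h2mu
  have hamgm : 0 ≤ (√(sigma2 lam) - s * √(sigma2 mu)) ^ 2 := sq_nonneg _
  nlinarith [Real.sqrt_nonneg (sigma2 lam), Real.sqrt_nonneg (sigma2 mu)]

theorem stmt3_general (n : ℕ) (lam mu : Fin n → ℝ)
    (hlam : 0 < sigma1 lam ∧ 0 < sigma2 lam)
    (hmu : 0 < sigma1 mu ∧ 0 < sigma2 mu)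
    (t : ℝ) (ht0 : 0 ≤ t) (ht1 : t ≤ 1) :
    Real.sqrt (sigma2 (fun i => t * lam i + (1 - t) * mu i))
      ≥ t * Real.sqrt (sigma2 lam) + (1 - t) * Real.sqrt (sigma2 mu) := by
  obtain ⟨h1lam, h2lam⟩ := hlam
  obtain ⟨h1mu, h2mu⟩ := hmu
  have hpolar :=
    two_mul_sqrt_sigma2_mul_sqrt_sigma2_le_sigma2Polar h1lam h2lam.le h1mu h2mu.le
  have hA := Real.sq_sqrt h2lam.le
  have hB := Real.sq_sqrt h2mu.le
  have hweight : 0 ≤ t * (1 - t) := mul_nonneg ht0 (sub_nonneg.mpr ht1)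
  refine Real.le_sqrt_of_sq_le ?_
  rw [sigma2_linear_combination]
  nlinarith

theorem stmt3 (n : ℕ) (hn : 2 ≤ n) (lam mu : Fin n → ℝ)
    (hlam : 0 < sigma1 lam ∧ 0 < sigma2 lam)
    (hmu : 0 < sigma1 mu ∧ 0 < sigma2 mu)
    (t : ℝ) (ht0 : 0 ≤ t) (ht1 : t ≤ 1) :
    Real.sqrt (sigma2 (fun i => t * lam i + (1 - t) * mu i))
      ≥ t * Real.sqrt (sigma2 lam) + (1 - t) * Real.sqrt (sigma2 mu) :=
  stmt3_general n lam mu hlam hmu t ht0 ht1
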